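/- arXiv:1905.09756 — 5 statements merged into one kernel-verified Lean document; each statement's English description precedes it below -/
import Mathlib

section
/- Andréief's identity: for integrable functions f_1,...,f_n, g_1,...,g_n on ℝ with respect to a Borel measure ν, the integral over the ordered simplex {x_1 ≤ x_2 ≤ ... ≤ x_n} of det(f_j(x_i)) · det(g_j(x_i)) with respect to ν^n equals det( ∫_ℝ f_i(x) g_j(x) dν(x) )_{1≤i,j≤n}. -/
/-!
Expanding `det (f j (x i))` over permutations gives `F x * G x = ∑ σ, H (x ∘ σ)` with
`H x = (∏ i, f i (x i)) * det (g j (x i))`, since permuting the rows of `det (g j (x i))` produces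
the same sign as the expansion. `H` vanishes on tuples with a repeated entry, and every tuple
with distinct entries is sorted by exactly one permutation, so integrating `∑ σ, H (x ∘ σ)` over
the ordered simplex is integrating `H` over the whole space. Expanding `det (g j (x i))` once more
and applying Fubini to each product turns `∫ H` into `det (∫ f i * g j)`.
-/

open MeasureTheory Matrix Equiv

section Determinant

variable {ι α R : Type*} [Fintype ι] [DecidableEq ι] [CommRing R]

theorem det_of_apply_comp_perm (g : ι → α → R) (x : ι → α) (σ : Perm ι) :
    (of fun i j => g j (x (σ i))).det = Perm.sign σ * (of fun i j => g j (x i)).det :=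
  det_permute σ (of fun i j => g j (x i))

theorem det_of_apply_eq_zero_of_not_injective (g : ι → α → R) {x : ι → α}
    (hx : ¬Function.Injective x) : (of fun i j => g j (x i)).det = 0 := by
  obtain ⟨i, j, hxij, hij⟩ := Function.not_injective_iff.mp hx
  exact det_zero_of_row_eq hij (funext fun k => by simp [hxij])

theorem prod_mul_det_of_apply_eq_sum (f g : ι → α → R) (x : ι → α) :
    (∏ i, f i (x i)) * (of fun i j => g j (x i)).det =
      ∑ σ : Perm ι, Perm.sign σ * ∏ i, f i (x i) * g (σ i) (x i) := by
  rw [← det_transpose, det_apply', Finset.mul_sum]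
  refine Finset.sum_congr rfl fun σ _ => ?_
  simp only [transpose_apply, of_apply, Finset.prod_mul_distrib]
  ring

theorem det_of_mul_det_of_eq_sum_perm (f g : ι → α → R) (x : ι → α) :
    (of fun i j => f j (x i)).det * (of fun i j => g j (x i)).det =
      ∑ σ : Perm ι, (∏ i, f i (x (σ i))) * (of fun i j => g j (x (σ i))).det := by
  simp only [det_apply' (of fun i j => f j (x i)), Finset.sum_mul, det_of_apply_comp_perm]
  refine Finset.sum_congr rfl fun σ _ => ?_
  simp only [of_apply]
  ring

end Determinant

section Integral

variable {ι α 𝕜 : Type*} [Fintype ι] [DecidableEq ι] [MeasurableSpace α] {μ : Measure α}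
  [SigmaFinite μ] [RCLike 𝕜] {f g : ι → α → 𝕜}

theorem integrable_prod_mul_det_of_apply (hfg : ∀ i j, Integrable (fun t => f i t * g j t) μ) :
    Integrable (fun x : ι → α => (∏ i, f i (x i)) * (of fun i j => g j (x i)).det)
      (Measure.pi fun _ => μ) := by
  simp_rw [prod_mul_det_of_apply_eq_sum]
  exact integrable_finsetSum _ fun σ _ =>
    (Integrable.fintype_prod fun i => hfg i (σ i)).const_mul _

theorem integral_prod_mul_det_of_apply (hfg : ∀ i j, Integrable (fun t => f i t * g j t) μ) :
    ∫ x, (∏ i, f i (x i)) * (of fun i j => g j (x i)).det ∂(Measure.pi fun _ => μ) =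
      (of fun i j => ∫ t, f i t * g j t ∂μ).det := by
  simp_rw [prod_mul_det_of_apply_eq_sum]
  rw [integral_finsetSum _ fun σ _ => (Integrable.fintype_prod fun i => hfg i (σ i)).const_mul _,
    ← det_transpose, det_apply']
  refine Finset.sum_congr rfl fun σ _ => ?_
  rw [integral_const_mul, integral_fintype_prod_eq_prod (fun i t => f i t * g (σ i) t)]
  rfl

end Integral

section PermuteCoordinates

variable {ι α : Type*} [MeasurableSpace α]

theorem measurableEmbedding_comp_perm (σ : Perm ι) :
    MeasurableEmbedding (fun x : ι → α => x ∘ σ) :=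
  (MeasurableEquiv.piCongrLeft (fun _ : ι => α) σ).symm.measurableEmbedding

theorem measurePreserving_comp_perm [Fintype ι] (μ : Measure α) [SigmaFinite μ] (σ : Perm ι) :
    MeasurePreserving (fun x : ι → α => x ∘ σ) (Measure.pi fun _ => μ) (Measure.pi fun _ => μ) :=
  (measurePreserving_piCongrLeft (fun _ => μ) σ).symm

end PermuteCoordinates

section Symmetrization

variable {α E : Type*} {n : ℕ}

theorem sum_perm_indicator_monotone_comp [LinearOrder α] [AddCommMonoid E]
    (H : (Fin n → α) → E) (hH : ∀ x, ¬Function.Injective x → H x = 0) (x : Fin n → α) :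
    ∑ σ : Perm (Fin n), {y : Fin n → α | Monotone (y ∘ σ)}.indicator H x = H x := by
  by_cases hx : Function.Injective x
  · have sorts_iff (σ : Perm (Fin n)) : Monotone (x ∘ σ) ↔ σ = Tuple.sort x :=
      ⟨fun h => Equiv.ext fun i =>
          hx (congrFun (Tuple.unique_monotone h (Tuple.monotone_sort x)) i),
        fun h => h ▸ Tuple.monotone_sort x⟩
    rw [Finset.sum_eq_single_of_mem (Tuple.sort x) (Finset.mem_univ _)]
    · exact Set.indicator_of_mem (Tuple.monotone_sort x) H
    · exact fun σ _ hσ => Set.indicator_of_notMem (fun h => hσ ((sorts_iff σ).1 h)) H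
  · rw [hH x hx]
    exact Finset.sum_eq_zero fun σ _ => Set.indicator_apply_eq_zero.2 fun _ => hH x hx

variable [LinearOrder α] [TopologicalSpace α] [OrderClosedTopology α] [SecondCountableTopology α]
  [MeasurableSpace α] [OpensMeasurableSpace α] [NormedAddCommGroup E] [NormedSpace ℝ E]

theorem measurableSet_monotone_comp (σ : Perm (Fin n)) :
    MeasurableSet {x : Fin n → α | Monotone (x ∘ σ)} :=
  isClosed_monotone.measurableSet.preimage (measurableEmbedding_comp_perm σ).measurable

theorem setIntegral_monotone_sum_perm_comp (μ : Measure α) [SigmaFinite μ] (H : (Fin n → α) → E)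
    (hH_int : Integrable H (Measure.pi fun _ => μ)) (hH : ∀ x, ¬Function.Injective x → H x = 0) :
    ∫ x in {x | Monotone x}, ∑ σ : Perm (Fin n), H (x ∘ σ) ∂(Measure.pi fun _ => μ) =
      ∫ x, H x ∂(Measure.pi fun _ => μ) :=
  calc ∫ x in {x | Monotone x}, ∑ σ : Perm (Fin n), H (x ∘ σ) ∂(Measure.pi fun _ => μ)
      = ∑ σ : Perm (Fin n), ∫ x in {x | Monotone x}, H (x ∘ σ) ∂(Measure.pi fun _ => μ) :=
        integral_finsetSum _ fun σ _ =>
          ((measurePreserving_comp_perm μ σ).integrable_comp_emb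
            (measurableEmbedding_comp_perm σ)).2 hH_int |>.integrableOn
    _ = ∑ σ : Perm (Fin n), ∫ y in {y | Monotone (y ∘ ⇑σ⁻¹)}, H y ∂(Measure.pi fun _ => μ) := by
        refine Finset.sum_congr rfl fun σ _ => ?_
        rw [← (measurePreserving_comp_perm μ σ).setIntegral_preimage_emb
          (measurableEmbedding_comp_perm σ) H {y | Monotone (y ∘ ⇑σ⁻¹)}]
        congr 2
        ext x
        simp [Function.comp_assoc]
    _ = ∑ σ : Perm (Fin n), ∫ y in {y | Monotone (y ∘ σ)}, H y ∂(Measure.pi fun _ => μ) :=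
        _root_.Equiv.sum_comp (Equiv.inv (Perm (Fin n)))
          fun σ => ∫ y in {y | Monotone (y ∘ σ)}, H y ∂(Measure.pi fun _ => μ)
    _ = ∫ y, ∑ σ : Perm (Fin n), {y | Monotone (y ∘ σ)}.indicator H y ∂(Measure.pi fun _ => μ) := by
        rw [integral_finsetSum _ fun σ _ => hH_int.indicator (measurableSet_monotone_comp σ)]
        exact Finset.sum_congr rfl fun σ _ =>
          (integral_indicator (measurableSet_monotone_comp σ)).symm
    _ = ∫ x, H x ∂(Measure.pi fun _ => μ) := by
        simp_rw [sum_perm_indicator_monotone_comp H hH]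

end Symmetrization

theorem andreief_identity_general (n : ℕ) (ν : Measure ℝ) [SigmaFinite ν]
    (f g : Fin n → ℝ → ℝ)
    (hfg : ∀ i j, Integrable (fun t => f i t * g j t) ν) :
    ∫ x in {x : Fin n → ℝ | ∀ i j : Fin n, i ≤ j → x i ≤ x j},
        (Matrix.of fun i j : Fin n => f j (x i)).det *
          (Matrix.of fun i j : Fin n => g j (x i)).det
        ∂(Measure.pi fun _ => ν)
      = (Matrix.of fun i j : Fin n => ∫ t, f i t * g j t ∂ν).det := by
  have H_vanishes (x : Fin n → ℝ) (hx : ¬Function.Injective x) :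
      (∏ i, f i (x i)) * (of fun i j => g j (x i)).det = 0 := by
    rw [det_of_apply_eq_zero_of_not_injective g hx, mul_zero]
  simp_rw [det_of_mul_det_of_eq_sum_perm f g]
  rw [← integral_prod_mul_det_of_apply hfg]
  exact setIntegral_monotone_sum_perm_comp ν _ (integrable_prod_mul_det_of_apply hfg) H_vanishes

/-- Andréief's identity. For integrable functions `f_1,...,f_n`,
`g_1,...,g_n` on `ℝ` with respect to a (σ-finite Borel) measure `ν`, the integral over
the ordered simplex `{x_1 ≤ ... ≤ x_n}` of `det(f_j(x_i)) · det(g_j(x_i))` with respect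
to `ν^n` equals `det(∫ f_i g_j dν)`. -/
theorem andreief_identity (n : ℕ) (ν : Measure ℝ) [SigmaFinite ν]
    (f g : Fin n → ℝ → ℝ)
    (hf : ∀ i, Integrable (f i) ν) (hg : ∀ i, Integrable (g i) ν)
    (hfg : ∀ i j, Integrable (fun t => f i t * g j t) ν) :
    ∫ x in {x : Fin n → ℝ | ∀ i j : Fin n, i ≤ j → x i ≤ x j},
        (Matrix.of fun i j : Fin n => f j (x i)).det *
          (Matrix.of fun i j : Fin n => g j (x i)).det
        ∂(Measure.pi fun _ => ν)
      = (Matrix.of fun i j : Fin n => ∫ t, f i t * g j t ∂ν).det :=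
  andreief_identity_general n ν f g hfg
end

section
/- Let W_{1,1}, W_{1,2}, W_{2,1} be independent nonnegative-integer-valued random variables where W_{1,2} and W_{2,1} are geometric with the same parameter. Then W_{1,1} + max(W_{1,2}, W_{2,1}) + W_{1,1} has the same distribution as W_{2,1} + W_{1,1} + W_{1,2} (i.e. the 2×2 antidiagonally-symmetric and diagonally-symmetric last passage times coincide in law). -/
open MeasureTheory ProbabilityTheory

/-!
For independent `W11 ~ Geom(p²)` and `W12, W21 ~ Geom(p)` the joint law of `(W11, W12, W21)`
gives `(a, b, c)` mass proportional to `p ^ (2a + b + c)`. The bijection `lppEquiv` of `ℕ³`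
preserves `2a + b + c` and turns the antidiagonal passage time `a + max b c + a` into the
diagonal one, so it preserves the joint law and transports one passage time onto the other.
-/

def geomWeight (t : ℕ × ℕ × ℕ) : ℕ := 2 * t.1 + t.2.1 + t.2.2

def antidiagPassage (t : ℕ × ℕ × ℕ) : ℕ := t.1 + max t.2.1 t.2.2 + t.1

def diagPassage (t : ℕ × ℕ × ℕ) : ℕ := t.2.2 + t.1 + t.2.1

-- The parity of the middle coordinate records which of `b`, `c` is larger; this makes it invertible.
def lppEquiv : (ℕ × ℕ × ℕ) ≃ (ℕ × ℕ × ℕ) where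
  toFun | (a, b, c) => if c < b then (c, 2 * a + 1, b - c - 1) else (b, 2 * a, c - b)
  invFun | (m, n, d) => if n % 2 = 0 then (n / 2, m, m + d) else (n / 2, m + d + 1, m)
  left_inv := by
    rintro ⟨a, b, c⟩
    by_cases h : c < b <;> simp [h, Prod.ext_iff] <;> omega
  right_inv := by
    rintro ⟨m, n, d⟩
    by_cases h : n % 2 = 0 <;> simp [h, Prod.ext_iff] <;> omega

theorem geomWeight_lppEquiv (t : ℕ × ℕ × ℕ) : geomWeight (lppEquiv t) = geomWeight t := by
  obtain ⟨a, b, c⟩ := t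
  by_cases h : c < b <;> simp [lppEquiv, geomWeight, h] <;> omega

theorem diagPassage_lppEquiv (t : ℕ × ℕ × ℕ) :
    diagPassage (lppEquiv t) = antidiagPassage t := by
  obtain ⟨a, b, c⟩ := t
  by_cases h : c < b <;> simp [lppEquiv, diagPassage, antidiagPassage, h] <;> omega

theorem ProbabilityTheory.iIndepFun.measure_preimage_prod_three {Ω β : Type*}
    [MeasurableSpace Ω] {μ : Measure Ω} [MeasurableSpace β] {X Y Z : Ω → β}
    (h : iIndepFun ![X, Y, Z] μ) {A B C : Set β}
    (hA : MeasurableSet A) (hB : MeasurableSet B) (hC : MeasurableSet C) :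
    μ ((fun ω => (X ω, Y ω, Z ω)) ⁻¹' (A ×ˢ B ×ˢ C))
      = μ (X ⁻¹' A) * μ (Y ⁻¹' B) * μ (Z ⁻¹' C) := by
  have hpre : (fun ω => (X ω, Y ω, Z ω)) ⁻¹' (A ×ˢ B ×ˢ C)
      = ⋂ i, ![X, Y, Z] i ⁻¹' ![A, B, C] i := by
    ext ω
    simp [Fin.forall_fin_succ]
  rw [hpre, h.meas_iInter, Fin.prod_univ_three]
  · rfl
  intro i
  fin_cases i
  exacts [⟨A, hA, rfl⟩, ⟨B, hB, rfl⟩, ⟨C, hC, rfl⟩]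

theorem MeasureTheory.Measure.map_equiv_eq_self_of_singleton {α : Type*} [MeasurableSpace α]
    [Countable α] [MeasurableSingletonClass α] (ν : Measure α) (e : α ≃ α)
    (h : ∀ t, ν {e t} = ν {t}) : ν.map e = ν := by
  refine Measure.ext_of_singleton fun t => ?_
  rw [Measure.map_apply (measurable_of_countable e) (measurableSet_singleton t),
    ← e.image_symm_eq_preimage, Set.image_singleton, ← h, e.apply_symm_apply]

theorem geometric_mass_mul {p : ℝ} (hp0 : 0 ≤ p) (hp1 : p ≤ 1) (a b c : ℕ) :
    ENNReal.ofReal ((1 - p ^ 2) * (p ^ 2) ^ a) * ENNReal.ofReal ((1 - p) * p ^ b)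
        * ENNReal.ofReal ((1 - p) * p ^ c)
      = ENNReal.ofReal ((1 - p ^ 2) * (1 - p) ^ 2 * p ^ (2 * a + b + c)) := by
  have : 0 ≤ 1 - p ^ 2 := by nlinarith
  rw [← ENNReal.ofReal_mul (by positivity), ← ENNReal.ofReal_mul (by positivity)]
  congr 1
  ring

theorem lpp_2x2_equality_in_law_general {Ω : Type*} [MeasurableSpace Ω]
    (μ : Measure Ω)
    (W11 W12 W21 : Ω → ℕ)
    (hm11 : Measurable W11) (hm12 : Measurable W12) (hm21 : Measurable W21)
    (p : ℝ) (hp0 : 0 < p) (hp1 : p < 1)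
    (h11 : ∀ k : ℕ, μ {ω | W11 ω = k} = ENNReal.ofReal ((1 - p ^ 2) * (p ^ 2) ^ k))
    (h12 : ∀ k : ℕ, μ {ω | W12 ω = k} = ENNReal.ofReal ((1 - p) * p ^ k))
    (h21 : ∀ k : ℕ, μ {ω | W21 ω = k} = ENNReal.ofReal ((1 - p) * p ^ k))
    (hind : iIndepFun (m := fun _ : Fin 3 => (inferInstance : MeasurableSpace ℕ))
      ![W11, W12, W21] μ) :
    Measure.map (fun ω => W11 ω + max (W12 ω) (W21 ω) + W11 ω) μ
      = Measure.map (fun ω => W21 ω + W11 ω + W12 ω) μ := by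
  set T : Ω → ℕ × ℕ × ℕ := fun ω => (W11 ω, W12 ω, W21 ω)
  have hT : Measurable T := hm11.prodMk (hm12.prodMk hm21)
  have hmass (t : ℕ × ℕ × ℕ) : μ.map T {t} =
      ENNReal.ofReal ((1 - p ^ 2) * (1 - p) ^ 2 * p ^ geomWeight t) := by
    obtain ⟨a, b, c⟩ := t
    rw [Measure.map_apply hT (measurableSet_singleton _), ← Set.singleton_prod_singleton,
      ← Set.singleton_prod_singleton, hind.measure_preimage_prod_three
        (measurableSet_singleton a) (measurableSet_singleton b) (measurableSet_singleton c)]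
    simp only [Set.preimage, Set.mem_singleton_iff]
    rw [h11, h12, h21, geometric_mass_mul hp0.le hp1.le]
    rfl
  have hinv : (μ.map T).map lppEquiv = μ.map T :=
    Measure.map_equiv_eq_self_of_singleton _ _ fun t => by rw [hmass, hmass, geomWeight_lppEquiv]
  calc μ.map (fun ω => W11 ω + max (W12 ω) (W21 ω) + W11 ω)
      = (μ.map T).map (diagPassage ∘ lppEquiv) := by
        rw [Measure.map_map (measurable_of_countable _) hT]
        exact congrArg (Measure.map · μ) (funext fun ω => (diagPassage_lppEquiv (T ω)).symm)
    _ = (μ.map T).map diagPassage := by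
        rw [← Measure.map_map (measurable_of_countable _) (measurable_of_countable _), hinv]
    _ = μ.map (fun ω => W21 ω + W11 ω + W12 ω) := Measure.map_map (measurable_of_countable _) hT

/-- for independent nonnegative-integer random variables `W11, W12, W21`
where `W11` is geometric with parameter `p²` and `W12`, `W21` are geometric with the
same parameter `p`, the 2×2 antidiagonally-symmetric last passage time
`W11 + max(W12, W21) + W11` has the same law as the diagonally-symmetric one
`W21 + W11 + W12`. -/
theorem lpp_2x2_equality_in_law {Ω : Type*} [MeasurableSpace Ω]
    (μ : Measure Ω) [IsProbabilityMeasure μ]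
    (W11 W12 W21 : Ω → ℕ)
    (hm11 : Measurable W11) (hm12 : Measurable W12) (hm21 : Measurable W21)
    (p : ℝ) (hp0 : 0 < p) (hp1 : p < 1)
    (h11 : ∀ k : ℕ, μ {ω | W11 ω = k} = ENNReal.ofReal ((1 - p ^ 2) * (p ^ 2) ^ k))
    (h12 : ∀ k : ℕ, μ {ω | W12 ω = k} = ENNReal.ofReal ((1 - p) * p ^ k))
    (h21 : ∀ k : ℕ, μ {ω | W21 ω = k} = ENNReal.ofReal ((1 - p) * p ^ k))
    (hind : iIndepFun (m := fun _ : Fin 3 => (inferInstance : MeasurableSpace ℕ))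
      ![W11, W12, W21] μ) :
    Measure.map (fun ω => W11 ω + max (W12 ω) (W21 ω) + W11 ω) μ
      = Measure.map (fun ω => W21 ω + W11 ω + W12 ω) μ :=
  lpp_2x2_equality_in_law_general μ W11 W12 W21 hm11 hm12 hm21 p hp0 hp1 h11 h12 h21 hind
end

section
/- Define, for a partition λ with at most n parts and a parameter β, the CB-interpolating polynomial so^{(2n+1)}_λ(x; β) := Σ_{ε ∈ {0,1}^n} β^{|ε|} sp^{(2n)}_{λ-ε}(x), where sp^{(2n)}_μ(x) = 0 if μ = λ - ε is not a partition and sp^{(2n)}_μ is given by its Weyl character formula. Then so^{(2n+1)}_λ(x; β) = det( x_j^{λ_i+n-i+1} - x_j^{-(λ_i+n-i+1)} + β[x_j^{λ_i+n-i} - x_j^{-(λ_i+n-i)}] )_{1≤i,j≤n} / det( x_j^{n-i+1} - x_j^{-(n-i+1)} )_{1≤i,j≤n}. -/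
open scoped Classical


lemma det_expand {K : Type*} [Field K] (n : ℕ) (u g : Fin n → Fin n → K) (β : K) :
    (Matrix.of fun i j : Fin n => u i j + β * g i j).det
      = ∑ ε : Fin n → Bool,
          β ^ (Finset.univ.filter (fun i => ε i = true)).card
            * (Matrix.of fun i j : Fin n => if ε i then g i j else u i j).det := by
  classical
  set f : MultilinearMap K (fun _ : Fin n => Fin n → K) K :=
    (Matrix.detRowAlternating : (Fin n → K) [⋀^Fin n]→ₗ[K] K).toMultilinearMap with hf
  have hdet : ∀ M : Fin n → Fin n → K, (Matrix.of M).det = f M := fun _ => rfl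
  have key : (Matrix.of fun i j : Fin n => u i j + β * g i j).det
      = ∑ s : Finset (Fin n),
          β ^ s.card * (Matrix.of fun i j : Fin n => if i ∈ s then g i j else u i j).det := by
    have h0 : (Matrix.of fun i j : Fin n => u i j + β * g i j).det
        = f (((fun i => β • g i) + u : Fin n → Fin n → K)) := by
      rw [hdet]
      congr 1
      funext i j
      simp [Pi.add_apply, Pi.smul_apply, smul_eq_mul]
      ring
    rw [h0, f.map_add_univ (fun i => β • g i) u]
    refine Finset.sum_congr rfl fun s _ => ?_
    have h1 : s.piecewise (fun i => β • g i) u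
        = s.piecewise (fun i => β • (s.piecewise g u) i) (s.piecewise g u) := by
      funext i
      by_cases hi : i ∈ s
      · simp [Finset.piecewise_eq_of_mem _ _ _ hi]
      · simp [Finset.piecewise_eq_of_notMem _ _ _ hi]
    rw [h1, f.map_piecewise_smul (fun _ => β) (s.piecewise g u) s]
    have h2 : f (s.piecewise g u)
        = (Matrix.of fun i j : Fin n => if i ∈ s then g i j else u i j).det := by
      rw [hdet]
      congr 1
      funext i j
      by_cases hi : i ∈ s
      · simp [Finset.piecewise_eq_of_mem _ _ _ hi, hi]
      · simp [Finset.piecewise_eq_of_notMem _ _ _ hi, hi]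
    rw [h2]
    simp [smul_eq_mul]
  rw [key]
  refine (Fintype.sum_bijective (fun ε : Fin n → Bool => Finset.univ.filter fun i => ε i = true)
    ?_ _ _ fun ε => ?_).symm
  · constructor
    · intro ε ε' h
      funext i
      have := Finset.ext_iff.mp h i
      simpa using this
    · intro s
      refine ⟨fun i => i ∈ s, ?_⟩
      ext i; simp
  · congr 1
    congr 1
    funext i j
    simp


/-- If `μ` satisfies `-1 ≤ μ i` and `μ j ≤ μ i + 1` for `i ≤ j`, but fails the
partition condition, the Weyl numerator determinant vanishes. -/
lemma det_mu_zero {K : Type*} [Field K] (n : ℕ) (μ : Fin n → ℤ) (x : Fin n → K)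
    (hbd : ∀ i, -1 ≤ μ i) (hstep : ∀ i j : Fin n, i ≤ j → μ j ≤ μ i + 1)
    (h : ¬ ((∀ i j : Fin n, i ≤ j → μ j ≤ μ i) ∧ (∀ i, 0 ≤ μ i))) :
    (Matrix.of fun i j : Fin n =>
        x j ^ (μ i + n - (i : ℕ)) - x j ^ (-(μ i + n - (i : ℕ)))).det = 0 := by
  classical
  by_cases hmono : ∀ i j : Fin n, i ≤ j → μ j ≤ μ i
  · -- monotone, so some entry is negative, hence the last entry is -1, last row is zero
    have hneg : ∃ i, μ i < 0 := by
      by_contra hc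
      push_neg at hc
      exact h ⟨hmono, fun i => hc i⟩
    obtain ⟨i, hi⟩ := hneg
    have hn : 0 < n := i.pos
    set last : Fin n := ⟨n - 1, by omega⟩ with hlast
    have hile : i ≤ last := by
      have := i.isLt
      simp only [Fin.le_def, hlast]
      omega
    have h1 : μ last = -1 := by
      have := hmono i last hile
      have := hbd last
      omega
    apply Matrix.det_eq_zero_of_row_eq_zero last
    intro j
    have hexp : μ last + n - ((last : ℕ) : ℤ) = 0 := by
      have : ((last : ℕ) : ℤ) = (n : ℤ) - 1 := by
        simp only [hlast]
        omega
      rw [this, h1]; ring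
    simp only [Matrix.of_apply, hexp, neg_zero, zpow_zero, sub_self]
  · -- a consecutive violation exists; those two rows coincide
    push_neg at hmono
    obtain ⟨i, j, hij, hlt⟩ := hmono
    have hcons : ∃ k : ℕ, ∃ hk : k + 1 < n,
        μ ⟨k, by omega⟩ < μ ⟨k + 1, hk⟩ := by
      by_contra hc
      push_neg at hc
      have mono : ∀ d : ℕ, ∀ k : ℕ, ∀ hkd : k + d < n,
          μ ⟨k + d, hkd⟩ ≤ μ ⟨k, by omega⟩ := by
        intro d
        induction d with
        | zero => intro k hkd; simp
        | succ d ih =>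
          intro k hkd
          have h2 : μ ⟨k + d + 1, hkd⟩ ≤ μ ⟨k + d, by omega⟩ := hc (k + d) hkd
          exact le_trans h2 (ih k (by omega))
      have := mono ((j : ℕ) - (i : ℕ)) (i : ℕ) (by have := j.isLt; have := Fin.le_def.mp hij; omega)
      have heq : (⟨(i : ℕ) + ((j : ℕ) - (i : ℕ)), by have := j.isLt; have := Fin.le_def.mp hij; omega⟩ : Fin n) = j := by
        apply Fin.ext
        have := Fin.le_def.mp hij
        simp; omega
      rw [heq] at this
      have : μ j ≤ μ i := by simpa using this
      omega
    obtain ⟨k, hk, hklt⟩ := hcons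
    set a : Fin n := ⟨k, by omega⟩ with ha
    set b : Fin n := ⟨k + 1, hk⟩ with hb
    have hab : a ≤ b := by simp [Fin.le_def, ha, hb]
    have heq : μ b = μ a + 1 := by
      have := hstep a b hab
      omega
    apply Matrix.det_zero_of_row_eq (show a ≠ b by simp [Fin.ext_iff, ha, hb])
    funext j
    have hexp : μ a + n - ((a : ℕ) : ℤ) = μ b + n - ((b : ℕ) : ℤ) := by
      have hav : ((a : ℕ) : ℤ) = (k : ℤ) := by simp [ha]
      have hbv : ((b : ℕ) : ℤ) = (k : ℤ) + 1 := by simp [hb]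
      rw [hav, hbv, heq]; ring
    simp only [Matrix.of_apply, hexp]


/-- The symplectic character `sp^{(2n)}_μ(x)` of an integer vector `μ`, given by its
Weyl character formula when `μ` is a partition (weakly decreasing, nonnegative), and
`0` otherwise (0-based indexing: the 1-based exponent `μ_i + n - i + 1` is
`μ i + n - i`). -/
noncomputable def spCharZ {K : Type*} [Field K] (n : ℕ) (μ : Fin n → ℤ)
    (x : Fin n → K) : K :=
  if (∀ i j : Fin n, i ≤ j → μ j ≤ μ i) ∧ (∀ i, 0 ≤ μ i) then
    (Matrix.of fun i j : Fin n =>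
        x j ^ (μ i + n - (i : ℕ)) - x j ^ (-(μ i + n - (i : ℕ)))).det /
    (Matrix.of fun i j : Fin n =>
        x j ^ ((n : ℤ) - (i : ℕ)) - x j ^ (-((n : ℤ) - (i : ℕ)))).det
  else 0

/-- The CB-interpolating polynomial
`so^{(2n+1)}_λ(x; β) := Σ_{ε ∈ {0,1}^n} β^{|ε|} sp^{(2n)}_{λ-ε}(x)`. -/
noncomputable def cbPoly {K : Type*} [Field K] (n : ℕ) (lam : Fin n → ℕ)
    (x : Fin n → K) (β : K) : K :=
  ∑ ε : Fin n → Bool,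
    β ^ (Finset.univ.filter (fun i => ε i = true)).card *
      spCharZ n (fun i => (lam i : ℤ) - if ε i then 1 else 0) x

/-- the Weyl-character-type determinantal formula for the
CB-interpolating polynomial. -/
theorem cbPoly_weyl_formula {K : Type*} [Field K] (n : ℕ) (lam : Fin n → ℕ)
    (hlam : Antitone lam) (x : Fin n → K) (hx : ∀ i, x i ≠ 0) (β : K) :
    cbPoly n lam x β
      = (Matrix.of fun i j : Fin n =>
          x j ^ ((lam i : ℤ) + n - (i : ℕ)) - x j ^ (-((lam i : ℤ) + n - (i : ℕ)))
            + β * (x j ^ ((lam i : ℤ) + n - (i : ℕ) - 1)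
                - x j ^ (-((lam i : ℤ) + n - (i : ℕ) - 1)))).det /
        (Matrix.of fun i j : Fin n =>
          x j ^ ((n : ℤ) - (i : ℕ)) - x j ^ (-((n : ℤ) - (i : ℕ)))).det := by
    classical
  rw [det_expand n
    (fun i j : Fin n => x j ^ ((lam i : ℤ) + n - (i : ℕ)) - x j ^ (-((lam i : ℤ) + n - (i : ℕ))))
    (fun i j : Fin n => x j ^ ((lam i : ℤ) + n - (i : ℕ) - 1)
        - x j ^ (-((lam i : ℤ) + n - (i : ℕ) - 1))) β]
  rw [Finset.sum_div, cbPoly]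
  refine Finset.sum_congr rfl fun ε _ => ?_
  rw [mul_div_assoc]
  congr 1
  set μ : Fin n → ℤ := fun i => (lam i : ℤ) - if ε i then 1 else 0 with hμ
  have hM : (Matrix.of fun i j : Fin n =>
      if ε i then x j ^ ((lam i : ℤ) + n - (i : ℕ) - 1)
          - x j ^ (-((lam i : ℤ) + n - (i : ℕ) - 1))
        else x j ^ ((lam i : ℤ) + n - (i : ℕ)) - x j ^ (-((lam i : ℤ) + n - (i : ℕ))))
      = (Matrix.of fun i j : Fin n =>
          x j ^ (μ i + n - (i : ℕ)) - x j ^ (-(μ i + n - (i : ℕ)))) := by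
    funext i j
    simp only [Matrix.of_apply, hμ]
    by_cases hε : ε i
    · have hexp : ((lam i : ℤ) - if ε i then 1 else 0) + n - (i : ℕ)
          = (lam i : ℤ) + n - (i : ℕ) - 1 := by
        rw [if_pos hε]; ring
      rw [hexp, if_pos hε]
    · have hexp : ((lam i : ℤ) - if ε i then 1 else 0) + n - (i : ℕ)
          = (lam i : ℤ) + n - (i : ℕ) := by
        rw [if_neg hε]; ring
      rw [hexp, if_neg hε]
  rw [hM, spCharZ]
  split_ifs with hcond
  · rfl
  · rw [det_mu_zero n μ x ?_ ?_ hcond, zero_div]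
    · intro i
      have : (0 : ℤ) ≤ (lam i : ℤ) := Int.ofNat_nonneg _
      simp only [hμ]
      split_ifs <;> omega
    · intro i j hij
      have h1 : (lam j : ℤ) ≤ (lam i : ℤ) := by exact_mod_cast hlam hij
      simp only [hμ]
      split_ifs <;> omega
end

section
/- For any integer partitions: if ν is a partition with at most n parts and k ≤ n, then the sum over ε ∈ {0,1}^n with |ε| = k of s_{ν+ε}(x_1,...,x_n) (with the convention that the Schur polynomial vanishes when ν+ε is not a partition) equals e_k(x_1,...,x_n) · s_ν(x_1,...,x_n), where e_k is the elementary symmetric polynomial of degree k in n variables. -/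
open scoped Classical

/-- The Schur polynomial of a vector `μ : Fin n → ℕ`, given by the Weyl
(bialternant) formula when `μ` is a partition (weakly decreasing), and `0`
otherwise (0-based: the 1-based exponent `μ_i + n - i` is `μ i + (n - 1 - i)`). -/
noncomputable def schurC {K : Type*} [Field K] (n : ℕ) (μ : Fin n → ℕ)
    (x : Fin n → K) : K :=
  if ∀ i j : Fin n, i ≤ j → μ j ≤ μ i then
    (Matrix.of fun i j : Fin n => x j ^ (μ i + (n - 1 - (i : ℕ)))).det /
    (Matrix.of fun i j : Fin n => x j ^ (n - 1 - (i : ℕ))).det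
  else 0

/-!
Write `s_μ = a_{μ+ρ} / a_ρ` with the alternant `a_α = det (x_j ^ α_i)`. Expanding `a_{α+1_S}` over
permutations `σ` splits off the monomial `∏_{i ∈ S} x_{σ⁻¹ i}`, and summing over `|S| = k` gives
`e_k`, whatever `σ` is, since `e_k` is symmetric; hence `∑_{|S| = k} a_{α+1_S} = e_k · a_α` for
every exponent vector `α`. Take `α = ν + ρ`: whenever `ν + 1_S` is not a partition, `ν + 1_S + ρ`
has two equal entries, so `a_{ν+1_S+ρ} = 0`, in accordance with the convention `s_{ν+1_S} = 0`.
-/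

open Finset

section PowersetCard

variable {ι R : Type*} [Fintype ι] [CommSemiring R]

theorem sum_powersetCard_prod_comp_equiv (k : ℕ) (σ : ι ≃ ι) (x : ι → R) :
    ∑ s ∈ powersetCard k univ, ∏ i ∈ s, x (σ i) = ∑ s ∈ powersetCard k univ, ∏ i ∈ s, x i := by
  have hmap : (powersetCard k univ).map (mapEmbedding σ.toEmbedding).toEmbedding =
      powersetCard k (univ : Finset ι) := by
    rw [← powersetCard_map, map_univ_equiv]
  conv_rhs => rw [← hmap, sum_map]
  simp [prod_map]

theorem sum_filter_card_eq_sum_powersetCard [DecidableEq ι] {M : Type*} [AddCommMonoid M]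
    (k : ℕ) (f : (ι → Bool) → M) :
    ∑ ε ∈ univ.filter (fun ε : ι → Bool => #(univ.filter fun i => ε i = true) = k), f ε =
      ∑ s ∈ powersetCard k univ, f fun i => decide (i ∈ s) := by
  refine sum_nbij' (fun ε => univ.filter fun i => ε i = true) (fun s i => decide (i ∈ s))
    ?_ ?_ ?_ ?_ ?_ <;> intro _ h
  · simpa using h
  · simpa using h
  · ext; simp
  · ext; simp
  · congr; ext; simp

end PowersetCard

section Alternant

variable {K : Type*} [Field K] {n : ℕ}

noncomputable def alternant (x : Fin n → K) (α : Fin n → ℕ) : K :=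
  (Matrix.of fun i j : Fin n => x j ^ α i).det

theorem alternant_eq_zero_of_eq (x : Fin n → K) {α : Fin n → ℕ} {i i' : Fin n} (hii' : i ≠ i')
    (hα : α i = α i') : alternant x α = 0 :=
  Matrix.det_zero_of_row_eq hii' (funext fun j => by simp [hα])

theorem sum_powersetCard_alternant_add_indicator (k : ℕ) (α : Fin n → ℕ) (x : Fin n → K) :
    ∑ s ∈ powersetCard k univ, alternant x (fun i => α i + if i ∈ s then 1 else 0) =
      (∑ s ∈ powersetCard k univ, ∏ i ∈ s, x i) * alternant x α := by
  have hterm : ∀ (σ : Equiv.Perm (Fin n)) (s : Finset (Fin n)),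
      ∏ j, x j ^ (α (σ j) + if σ j ∈ s then 1 else 0) =
        (∏ j, x j ^ α (σ j)) * ∏ i ∈ s, x (σ.symm i) := by
    intro σ s
    simp only [pow_add, prod_mul_distrib]
    congr 1
    rw [← σ.symm.prod_comp]
    simp [pow_ite]
  simp only [alternant, Matrix.det_apply, Matrix.of_apply, mul_sum]
  rw [sum_comm]
  refine sum_congr rfl fun σ _ => ?_
  rw [sum_congr rfl fun s _ => by rw [hterm], ← smul_sum, ← mul_sum, sum_powersetCard_prod_comp_equiv,
    mul_smul_comm, mul_comm]

/-- The exponent vector `ρ` of the Vandermonde determinant. -/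
def staircase (n : ℕ) (i : Fin n) : ℕ := n - 1 - i

/-- Where `ν + δ` fails to be a partition it rises by exactly one between adjacent rows, which `ρ`
compensates, so the alternant has two equal rows. -/
theorem alternant_add_eq_zero_of_not_antitone {ν δ : Fin n → ℕ} (hν : Antitone ν)
    (hδ : ∀ i, δ i ≤ 1) (hνδ : ¬Antitone fun i => ν i + δ i) (x : Fin n → K) :
    alternant x (fun i => ν i + staircase n i + δ i) = 0 := by
  cases n with
  | zero => exact absurd (fun i => i.elim0) hνδ
  | succ m =>
    rw [Fin.antitone_iff_succ_le] at hνδ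
    push Not at hνδ
    obtain ⟨i, hi⟩ := hνδ
    refine alternant_eq_zero_of_eq x (Fin.castSucc_lt_succ (i := i)).ne ?_
    have hνi := hν (Fin.castSucc_le_succ i)
    have := hδ i.castSucc
    have := hδ i.succ
    have := i.isLt
    simp only [staircase, Fin.val_castSucc, Fin.val_succ] at hνi hi ⊢
    omega

end Alternant

section Schur

variable {K : Type*} [Field K] {n : ℕ}

theorem schurC_of_antitone {μ : Fin n → ℕ} (hμ : Antitone μ) (x : Fin n → K) :
    schurC n μ x = alternant x (fun i => μ i + staircase n i) / alternant x (staircase n) :=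
  if_pos fun _ _ hij => hμ hij

theorem schurC_of_not_antitone {μ : Fin n → ℕ} (hμ : ¬Antitone μ) (x : Fin n → K) :
    schurC n μ x = 0 :=
  if_neg hμ

theorem schurC_add_of_le_one {ν δ : Fin n → ℕ} (hν : Antitone ν) (hδ : ∀ i, δ i ≤ 1)
    (x : Fin n → K) :
    schurC n (fun i => ν i + δ i) x =
      alternant x (fun i => ν i + staircase n i + δ i) / alternant x (staircase n) := by
  by_cases hνδ : Antitone fun i => ν i + δ i
  · simp only [schurC_of_antitone hνδ, add_right_comm]
  · rw [schurC_of_not_antitone hνδ, alternant_add_eq_zero_of_not_antitone hν hδ hνδ, zero_div]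

end Schur

theorem dual_pieri_rule_general {K : Type*} [Field K] (n : ℕ) (ν : Fin n → ℕ)
    (hν : Antitone ν) (k : ℕ) (x : Fin n → K) :
    ∑ ε ∈ Finset.univ.filter
        (fun ε : Fin n → Bool => (Finset.univ.filter (fun i => ε i = true)).card = k),
      schurC n (fun i => ν i + if ε i then 1 else 0) x
      = (∑ s ∈ Finset.powersetCard k (Finset.univ : Finset (Fin n)), ∏ i ∈ s, x i) *
          schurC n ν x := by
  have hε : ∀ (ε : Fin n → Bool) i, (if ε i then 1 else 0) ≤ 1 := fun ε i => by split <;> omega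
  simp_rw [schurC_add_of_le_one hν (hε _), ← sum_div]
  rw [sum_filter_card_eq_sum_powersetCard k
    fun ε => alternant x fun i => ν i + staircase n i + if ε i then 1 else 0]
  simp only [decide_eq_true_eq]
  rw [sum_powersetCard_alternant_add_indicator, schurC_of_antitone hν, mul_div_assoc]

/-- the dual Pieri rule. For a partition `ν` with at most `n` parts and
`k ≤ n`, `Σ_{ε ∈ {0,1}^n, |ε| = k} s_{ν+ε}(x) = e_k(x) · s_ν(x)`, with the convention
that `s_{ν+ε} = 0` when `ν+ε` is not a partition; here
`e_k(x) = Σ_{S ⊆ {1,...,n}, |S| = k} ∏_{i ∈ S} x_i`. -/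
theorem dual_pieri_rule {K : Type*} [Field K] (n : ℕ) (ν : Fin n → ℕ)
    (hν : Antitone ν) (k : ℕ) (hk : k ≤ n) (x : Fin n → K) :
    ∑ ε ∈ Finset.univ.filter
        (fun ε : Fin n → Bool => (Finset.univ.filter (fun i => ε i = true)).card = k),
      schurC n (fun i => ν i + if ε i then 1 else 0) x
      = (∑ s ∈ Finset.powersetCard k (Finset.univ : Finset (Fin n)), ∏ i ∈ s, x i) *
          schurC n ν x :=
  dual_pieri_rule_general n ν hν k x
end

section
/- There is a bijection between Gelfand–Tsetlin patterns of height n+m with bottom row (u,...,u,v,...,v) (n copies of u followed by m copies of v, u ≥ v ≥ 0) and, in the case n ≤ m, pairs (z, z') where z is a Gelfand–Tsetlin pattern of height m with bottom row (μ, v,...,v) (μ followed by m-n copies of v) and z' is a Gelfand–Tsetlin pattern of height n with bottom row μ, the union being over all partitions μ with v ≤ μ_n ≤ ... ≤ μ_1 ≤ u. -/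
/-- A Gelfand–Tsetlin pattern of height `N`: a triangular array of nonnegative
integers `z i j` (row `i`, 0-based, has entries for `j ≤ i`; entries with `j > i`
are normalized to `0`) satisfying the interlacing conditions
`z_{i+1,j+1} ≤ z_{i,j} ≤ z_{i+1,j}`. -/
structure GTPattern (N : ℕ) where
  z : Fin N → Fin N → ℕ
  zero_of_gt : ∀ i j : Fin N, (i : ℕ) < (j : ℕ) → z i j = 0
  interlace : ∀ (i : Fin N) (hi : (i : ℕ) + 1 < N) (j : Fin N) (hj : (j : ℕ) ≤ (i : ℕ)),
    z ⟨(i : ℕ) + 1, hi⟩ ⟨(j : ℕ) + 1, by omega⟩ ≤ z i j ∧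
      z i j ≤ z ⟨(i : ℕ) + 1, hi⟩ j

/-- Nat-indexed entry access. -/
def gz {N : ℕ} (P : GTPattern N) (i j : ℕ) : ℕ :=
  if h : i < N ∧ j < N then P.z ⟨i, h.1⟩ ⟨j, h.2⟩ else 0

lemma gz_eq {N : ℕ} (P : GTPattern N) (i j : Fin N) : P.z i j = gz P i j := by
  simp [gz, i.isLt, j.isLt]

lemma gz_interlace {N : ℕ} (P : GTPattern N) {i j : ℕ} (hi : i + 1 < N) (hj : j ≤ i) :
    gz P (i+1) (j+1) ≤ gz P i j ∧ gz P i j ≤ gz P (i+1) j := by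
  have h := P.interlace ⟨i, by omega⟩ hi ⟨j, by omega⟩ hj
  constructor
  · have := h.1
    rw [gz_eq, gz_eq] at this
    exact this
  · have := h.2
    rw [gz_eq, gz_eq] at this
    exact this

def mkGT (N : ℕ) (f : ℕ → ℕ → ℕ)
    (hf : ∀ i j, i + 1 < N → j ≤ i → f (i+1) (j+1) ≤ f i j ∧ f i j ≤ f (i+1) j) :
    GTPattern N where
  z i j := if (j : ℕ) ≤ (i : ℕ) then f i j else 0
  zero_of_gt i j h := by simp [Nat.not_le.mpr h]
  interlace i hi j hj := by
    simp only [if_pos hj, if_pos (Nat.succ_le_succ hj), if_pos (Nat.le_succ_of_le hj)]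
    exact hf i j hi hj

lemma mkGT_z (N : ℕ) (f : ℕ → ℕ → ℕ) (hf) (i j : Fin N) (h : (j : ℕ) ≤ (i : ℕ)) :
    (mkGT N f hf).z i j = f i j := if_pos h

lemma gz_mkGT {N : ℕ} (f : ℕ → ℕ → ℕ) (hf) {i j : ℕ} (hi : i < N) (hj : j ≤ i) :
    gz (mkGT N f hf) i j = f i j := by
  simp [gz, mkGT, hi, hj, show j < N by omega]

lemma GTPattern.ext' {N : ℕ} {P Q : GTPattern N} (h : ∀ i j : Fin N, P.z i j = Q.z i j) :
    P = Q := by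
  cases P; cases Q
  simp only [GTPattern.mk.injEq]
  funext i j
  exact h i j

lemma gz_le_down {N : ℕ} (P : GTPattern N) {j : ℕ} :
    ∀ d i, i + d < N → j ≤ i → gz P i j ≤ gz P (i + d) j := by
  intro d
  induction d with
  | zero => intro i _ _; exact le_rfl
  | succ d ih =>
    intro i h hj
    exact le_trans (ih i (by omega) hj) (gz_interlace P (by omega) (by omega)).2

lemma gz_diag {N : ℕ} (P : GTPattern N) :
    ∀ d i j, i + d < N → j ≤ i → gz P (i + d) (j + d) ≤ gz P i j := by
  intro d
  induction d with
  | zero => intro i j _ _; exact le_rfl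
  | succ d ih =>
    intro i j h hj
    exact le_trans (gz_interlace P (by omega) (by omega : j + d ≤ i + d)).1
      (ih i j (by omega) hj)

lemma gz_row_step {N : ℕ} (P : GTPattern N) {i j : ℕ} (hi : i + 1 < N) (hj : j + 1 ≤ i) :
    gz P i (j+1) ≤ gz P i j :=
  le_trans (gz_interlace P hi hj).2 (gz_interlace P hi (by omega)).1

lemma gz_row_anti {N : ℕ} (P : GTPattern N) {i : ℕ} (hi : i + 1 < N) :
    ∀ d j, j + d ≤ i → gz P i (j + d) ≤ gz P i j := by
  intro d
  induction d with
  | zero => intro j _; exact le_rfl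
  | succ d ih =>
    intro j h
    have h1 : gz P i ((j+d)+1) ≤ gz P i (j+d) := gz_row_step P (j := j + d) hi (by omega)
    exact le_trans h1 (ih j (by omega))
lemma gz_le_of_bottom {N : ℕ} (P : GTPattern N) {w : ℕ} (hN : 1 ≤ N)
    (hbot : ∀ j, j < N → gz P (N-1) j ≤ w) :
    ∀ i j, i < N → j ≤ i → gz P i j ≤ w := by
  intro i j hi hj
  have h := gz_le_down P (N-1-i) i (by omega) hj
  rw [show i + (N-1-i) = N-1 by omega] at h
  exact le_trans h (hbot j (by omega))

lemma gz_ge_of_bottom {N : ℕ} (P : GTPattern N) {w : ℕ} (hN : 1 ≤ N)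
    (hbot : ∀ j, j < N → w ≤ gz P (N-1) j) :
    ∀ i j, i < N → j ≤ i → w ≤ gz P i j := by
  intro i j hi hj
  have h := gz_diag P (N-1-i) i j (by omega) hj
  rw [show i + (N-1-i) = N-1 by omega] at h
  exact le_trans (hbot (j + (N-1-i)) (by omega)) h

def bwdf (n m u v : ℕ) (zz : GTPattern m) (z' : GTPattern n) (i j : ℕ) : ℕ :=
  if i < m then gz zz i j
  else if j + m ≤ i then u
  else if n ≤ j then v
  else gz z' (n+m-2-i) (j - (i-m+1))

lemma bwd_interlace (n m u v : ℕ) (hn : 1 ≤ n) (hnm : n ≤ m) (hvu : v ≤ u)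
    (μ : Fin n → ℕ) (hbd : ∀ i, v ≤ μ i ∧ μ i ≤ u)
    (zz : GTPattern m)
    (hzz : ∀ j, (hj : j < m) → gz zz (m-1) j = if h : j < n then μ ⟨j, h⟩ else v)
    (z' : GTPattern n)
    (hz' : ∀ j, (hj : j < n) → gz z' (n-1) j = μ ⟨j, hj⟩) :
    ∀ i j, i + 1 < n + m → j ≤ i →
      bwdf n m u v zz z' (i+1) (j+1) ≤ bwdf n m u v zz z' i j ∧
      bwdf n m u v zz z' i j ≤ bwdf n m u v zz z' (i+1) j := by
  have Hu : ∀ k j, k < n → j ≤ k → gz z' k j ≤ u :=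
    fun k j hk hj => gz_le_of_bottom z' hn
      (fun j hj => by rw [hz' j hj]; exact (hbd _).2) k j hk hj
  have Hv : ∀ k j, k < n → j ≤ k → v ≤ gz z' k j :=
    fun k j hk hj => gz_ge_of_bottom z' hn
      (fun j hj => by rw [hz' j hj]; exact (hbd _).1) k j hk hj
  have Hzu : ∀ i j, i < m → j ≤ i → gz zz i j ≤ u :=
    fun i j hi hj => gz_le_of_bottom zz (by omega)
      (fun j hj => by rw [hzz j hj]; split
                      · exact (hbd _).2
                      · exact hvu) i j hi hj
  have Hzv : ∀ i j, i < m → j ≤ i → v ≤ gz zz i j :=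
    fun i j hi hj => gz_ge_of_bottom zz (by omega)
      (fun j hj => by rw [hzz j hj]; split
                      · exact (hbd _).1
                      · exact le_rfl) i j hi hj
  intro i j hi hj
  by_cases h1 : i + 1 < m
  · -- both rows inside zz
    simp only [bwdf, if_pos h1, if_pos (show i < m by omega)]
    exact gz_interlace zz h1 hj
  by_cases h2 : i + 1 = m
  · -- seam row : i = m - 1
    have him : i = m - 1 := by omega
    simp only [bwdf, if_neg (show ¬ i + 1 < m by omega), if_pos (show i < m by omega),
      if_neg (show ¬ (j + 1 + m ≤ i + 1) by omega)]
    have hjm : j < m := by omega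
    constructor
    · -- lower: bwdf (i+1) (j+1) ≤ gz zz i j
      by_cases h3 : n ≤ j + 1
      · rw [if_pos h3]
        exact Hzv i j (by omega) hj
      · rw [if_neg h3]
        have hn2 : 2 ≤ n := by omega
        have key := gz_interlace z' (i := n-2) (j := j) (by omega) (by omega)
        rw [show n-2+1 = n-1 by omega] at key
        have e1 : n+m-2-(i+1) = n-2 := by omega
        have e2 : j + 1 - (i+1-m+1) = j := by omega
        rw [e1, e2, him]
        rw [hzz j (by omega), dif_pos (show j < n by omega)]
        rw [← hz' j (by omega)]
        exact key.2
    · -- upper: gz zz i j ≤ bwdf (i+1) j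
      by_cases h4 : j + m ≤ i + 1
      · rw [if_pos h4]
        exact Hzu i j (by omega) hj
      · rw [if_neg h4]
        by_cases h5 : n ≤ j
        · rw [if_pos h5, him, hzz j (by omega), dif_neg (show ¬ j < n by omega)]
        · rw [if_neg h5]
          have hj1 : 1 ≤ j := by omega
          have hn2 : 2 ≤ n := by omega
          have key := gz_interlace z' (i := n-2) (j := j-1) (by omega) (by omega)
          rw [show n-2+1 = n-1 by omega, show j-1+1 = j by omega] at key
          have e1 : n+m-2-(i+1) = n-2 := by omega
          have e2 : j - (i+1-m+1) = j - 1 := by omega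
          rw [e1, e2, him, hzz j (by omega), dif_pos (show j < n by omega),
            ← hz' j (by omega)]
          exact key.1
  · -- upper region : m ≤ i
    have hmi : m ≤ i := by omega
    simp only [bwdf, if_neg (show ¬ i + 1 < m by omega), if_neg (show ¬ i < m by omega)]
    by_cases c1 : j + m ≤ i
    · -- u-zone
      rw [if_pos c1, if_pos (show j + m ≤ i + 1 by omega),
        if_pos (show j + 1 + m ≤ i + 1 by omega)]
      exact ⟨le_rfl, le_rfl⟩
    · by_cases c3 : n ≤ j
      · -- v-zone
        rw [if_neg c1, if_pos c3, if_neg (show ¬ (j + 1 + m ≤ i + 1) by omega),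
          if_pos (show n ≤ j + 1 by omega), if_neg (show ¬ (j + m ≤ i + 1) by omega),
          if_pos c3]
        exact ⟨le_rfl, le_rfl⟩
      · -- z'-zone for (i, j)
        rw [if_neg c1, if_neg c3, if_neg (show ¬ (j + 1 + m ≤ i + 1) by omega)]
        set k := n + m - 2 - i with hk
        set j0 := j - (i - m + 1) with hj0
        have hkn : k < n := by omega
        have hj0k : j0 ≤ k := by omega
        constructor
        · -- lower
          by_cases c4 : n ≤ j + 1
          · rw [if_pos c4]
            exact Hv _ _ hkn hj0k
          · rw [if_neg c4]
            have hk1 : 1 ≤ k := by omega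
            have key := gz_interlace z' (i := k-1) (j := j0) (by omega) (by omega)
            rw [show k-1+1 = k by omega] at key
            rw [show n+m-2-(i+1) = k-1 by omega, show j+1-(i+1-m+1) = j0 by omega]
            exact key.2
        · -- upper
          by_cases c5 : j + m ≤ i + 1
          · rw [if_pos c5]
            exact Hu _ _ hkn hj0k
          · rw [if_neg c5, if_neg c3]
            have hk1 : 1 ≤ k := by omega
            have hjlb : 1 ≤ j0 := by omega
            have key := gz_interlace z' (i := k-1) (j := j0-1) (by omega) (by omega)
            rw [show k-1+1 = k by omega, show j0-1+1 = j0 by omega] at key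
            rw [show n+m-2-(i+1) = k-1 by omega, show j-(i+1-m+1) = j0-1 by omega]
            exact key.1
lemma lhs_bot {n m u v : ℕ} (hn : 1 ≤ n) (P : GTPattern (n+m))
    (hP : ∀ j : Fin (n+m), P.z ⟨n+m-1, by omega⟩ j = if (j:ℕ) < n then u else v) :
    ∀ j, j < n+m → gz P (n+m-1) j = if j < n then u else v := by
  intro j hj
  have h2 := hP ⟨j, hj⟩
  rw [gz_eq] at h2
  exact h2

lemma lhs_frozen_v {n m u v : ℕ} (hn : 1 ≤ n) (hvu : v ≤ u) (P : GTPattern (n+m))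
    (hP : ∀ j, j < n+m → gz P (n+m-1) j = if j < n then u else v) :
    ∀ i j, i < n+m → j ≤ i → n ≤ j → gz P i j = v := by
  intro i j hi hj hnj
  have h1 : gz P i j ≤ v := by
    have h := gz_le_down P (n+m-1-i) i (by omega) hj
    rw [show i + (n+m-1-i) = n+m-1 by omega, hP j (by omega),
      if_neg (show ¬ j < n by omega)] at h
    exact h
  have h2 : v ≤ gz P i j :=
    gz_ge_of_bottom P (by omega)
      (fun j hj => by rw [hP j hj]; split <;> omega) i j hi hj
  omega

lemma lhs_frozen_u {n m u v : ℕ} (hn : 1 ≤ n) (hvu : v ≤ u) (P : GTPattern (n+m))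
    (hP : ∀ j, j < n+m → gz P (n+m-1) j = if j < n then u else v) :
    ∀ i j, i < n+m → j ≤ i → j + m ≤ i → gz P i j = u := by
  intro i j hi hj hjm
  have h1 : u ≤ gz P i j := by
    have h := gz_diag P (n+m-1-i) i j (by omega) hj
    rw [show i + (n+m-1-i) = n+m-1 by omega, hP (j + (n+m-1-i)) (by omega),
      if_pos (show j + (n+m-1-i) < n by omega)] at h
    exact h
  have h2 : gz P i j ≤ u :=
    gz_le_of_bottom P (by omega)
      (fun j hj => by rw [hP j hj]; split <;> omega) i j hi hj
  omega

lemma zz_bot {n m v : ℕ} {μ : Fin n → ℕ} (hn : 1 ≤ n) (hnm : n ≤ m) (zz : GTPattern m)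
    (hzz : ∀ j : Fin m, zz.z ⟨m-1, by omega⟩ j = if h : (j:ℕ) < n then μ ⟨j, h⟩ else v) :
    ∀ j, j < m → gz zz (m-1) j = if h : j < n then μ ⟨j, h⟩ else v := by
  intro j hj
  have h2 := hzz ⟨j, hj⟩
  rw [gz_eq] at h2
  exact h2

lemma z'_bot {n : ℕ} {μ : Fin n → ℕ} (hn : 1 ≤ n) (z' : GTPattern n)
    (hz' : ∀ j : Fin n, z'.z ⟨n-1, by omega⟩ j = μ j) :
    ∀ j, (hj : j < n) → gz z' (n-1) j = μ ⟨j, hj⟩ := by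
  intro j hj
  have h2 := hz' ⟨j, hj⟩
  rw [gz_eq] at h2
  exact h2

def GTA (n m u v : ℕ) (hn : 1 ≤ n) (hnm : n ≤ m) : Type :=
  {P : GTPattern (n + m) //
    ∀ j : Fin (n + m), P.z ⟨n + m - 1, by omega⟩ j = if (j : ℕ) < n then u else v}

def GTB (n m u v : ℕ) (hn : 1 ≤ n) (hnm : n ≤ m) : Type :=
  Σ μ : {μ : Fin n → ℕ //
      (∀ i j : Fin n, i ≤ j → μ j ≤ μ i) ∧ ∀ i, v ≤ μ i ∧ μ i ≤ u},
    {zz : GTPattern m //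
        ∀ j : Fin m, zz.z ⟨m - 1, by omega⟩ j
          = if h : (j : ℕ) < n then μ.1 ⟨(j : ℕ), h⟩ else v}
    × {z' : GTPattern n //
        ∀ j : Fin n, z'.z ⟨n - 1, by omega⟩ j = μ.1 j}

def fwd (n m u v : ℕ) (hn : 1 ≤ n) (hnm : n ≤ m) (hvu : v ≤ u) :
    GTA n m u v hn hnm → GTB n m u v hn hnm := fun P =>
  ⟨⟨fun j => gz P.1 (m-1) (j : ℕ),
    by
      intro i j hij
      have hi := i.isLt
      have hj := j.isLt
      have hij' : (i:ℕ) ≤ (j:ℕ) := hij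
      have h := gz_row_anti P.1 (i := m-1) (by omega) ((j:ℕ) - (i:ℕ)) (i:ℕ) (by omega)
      rw [show (i:ℕ) + ((j:ℕ) - (i:ℕ)) = (j:ℕ) by omega] at h
      exact h,
    by
      intro i
      have hi := i.isLt
      have hP' := lhs_bot hn P.1 P.2
      constructor
      · exact gz_ge_of_bottom P.1 (by omega)
          (fun j hj => by rw [hP' j hj]; split <;> omega) (m-1) i (by omega) (by omega)
      · exact gz_le_of_bottom P.1 (by omega)
          (fun j hj => by rw [hP' j hj]; split <;> omega) (m-1) i (by omega) (by omega)⟩,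
    ⟨⟨mkGT m (fun i j => gz P.1 i j)
        (fun i j h1 h2 => gz_interlace P.1 (by omega) h2),
      by
        intro j
        have hj := j.isLt
        show (if (j:ℕ) ≤ m-1 then gz P.1 (m-1) (j:ℕ) else 0) = _
        rw [if_pos (show (j:ℕ) ≤ m-1 by omega)]
        by_cases hjn : (j:ℕ) < n
        · rw [dif_pos hjn]
        · rw [dif_neg hjn]
          exact lhs_frozen_v hn hvu P.1 (lhs_bot hn P.1 P.2) (m-1) (j:ℕ)
            (by omega) (by omega) (by omega)⟩,
     ⟨mkGT n (fun k j => gz P.1 (n+m-2-k) (j + (n-1-k)))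
        (by
          intro k j hk hj
          have key1 := gz_interlace P.1 (i := n+m-3-k) (j := j+(n-2-k))
            (by omega) (by omega)
          have key2 := gz_interlace P.1 (i := n+m-3-k) (j := j+(n-2-k)+1)
            (by omega) (by omega)
          show gz P.1 (n+m-2-(k+1)) ((j+1)+(n-1-(k+1))) ≤ gz P.1 (n+m-2-k) (j+(n-1-k)) ∧
            gz P.1 (n+m-2-k) (j+(n-1-k)) ≤ gz P.1 (n+m-2-(k+1)) (j+(n-1-(k+1)))
          constructor
          · rw [show n+m-2-(k+1) = n+m-3-k by omega,
              show (j+1)+(n-1-(k+1)) = j+(n-2-k)+1 by omega,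
              show j+(n-1-k) = (j+(n-2-k))+1 by omega,
              show n+m-2-k = (n+m-3-k)+1 by omega]
            exact key2.2
          · rw [show n+m-2-(k+1) = n+m-3-k by omega,
              show j+(n-1-(k+1)) = j+(n-2-k) by omega,
              show j+(n-1-k) = (j+(n-2-k))+1 by omega,
              show n+m-2-k = (n+m-3-k)+1 by omega]
            exact key1.1),
      by
        intro j
        have hj := j.isLt
        show (if (j:ℕ) ≤ n-1 then gz P.1 (n+m-2-(n-1)) ((j:ℕ) + (n-1-(n-1))) else 0) = _
        rw [if_pos (show (j:ℕ) ≤ n-1 by omega),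
          show n+m-2-(n-1) = m-1 by omega,
          show (j:ℕ) + (n-1-(n-1)) = (j:ℕ) by omega]⟩⟩⟩

def bwd (n m u v : ℕ) (hn : 1 ≤ n) (hnm : n ≤ m) (hvu : v ≤ u) :
    GTB n m u v hn hnm → GTA n m u v hn hnm := fun x =>
  ⟨mkGT (n+m) (bwdf n m u v x.2.1.1 x.2.2.1)
    (bwd_interlace n m u v hn hnm hvu x.1.1 x.1.2.2 x.2.1.1
      (zz_bot hn hnm x.2.1.1 x.2.1.2) x.2.2.1
      (z'_bot hn x.2.2.1 x.2.2.2)),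
   by
    intro j
    have hj := j.isLt
    show (if (j:ℕ) ≤ n+m-1 then bwdf n m u v x.2.1.1 x.2.2.1 (n+m-1) (j:ℕ) else 0) = _
    rw [if_pos (show (j:ℕ) ≤ n+m-1 by omega)]
    simp only [bwdf, if_neg (show ¬ (n+m-1 < m) by omega)]
    by_cases hjn : (j:ℕ) < n
    · rw [if_pos (show (j:ℕ) + m ≤ n+m-1 by omega), if_pos hjn]
    · rw [if_neg (show ¬ ((j:ℕ) + m ≤ n+m-1) by omega),
        if_pos (show n ≤ (j:ℕ) by omega), if_neg hjn]⟩
lemma bwd_fwd (n m u v : ℕ) (hn : 1 ≤ n) (hnm : n ≤ m) (hvu : v ≤ u) :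
    ∀ P, bwd n m u v hn hnm hvu (fwd n m u v hn hnm hvu P) = P := by
  intro P
  have hP' := lhs_bot hn P.1 P.2
  apply Subtype.ext
  apply GTPattern.ext'
  intro i j
  have hi := i.isLt
  have hj := j.isLt
  by_cases hij : (j:ℕ) ≤ (i:ℕ)
  · dsimp only [bwd, fwd]
    rw [gz_eq _ i j, gz_eq P.1 i j, gz_mkGT _ _ hi hij]
    simp only [bwdf]
    by_cases h1 : (i:ℕ) < m
    · rw [if_pos h1, gz_mkGT _ _ h1 hij]
    · rw [if_neg h1]
      by_cases h2 : (j:ℕ) + m ≤ (i:ℕ)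
      · rw [if_pos h2]
        exact (lhs_frozen_u hn hvu P.1 hP' (i:ℕ) (j:ℕ) hi hij h2).symm
      · rw [if_neg h2]
        by_cases h3 : n ≤ (j:ℕ)
        · rw [if_pos h3]
          exact (lhs_frozen_v hn hvu P.1 hP' (i:ℕ) (j:ℕ) hi hij h3).symm
        · rw [if_neg h3,
            gz_mkGT _ _ (show n+m-2-(i:ℕ) < n by omega)
              (show (j:ℕ) - ((i:ℕ)-m+1) ≤ n+m-2-(i:ℕ) by omega)]
          rw [show n+m-2-(n+m-2-(i:ℕ)) = (i:ℕ) by omega,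
            show (j:ℕ) - ((i:ℕ)-m+1) + (n-1-(n+m-2-(i:ℕ))) = (j:ℕ) by omega]
  · rw [P.1.zero_of_gt i j (by omega)]
    exact GTPattern.zero_of_gt _ i j (by omega)

lemma bwd_inj (n m u v : ℕ) (hn : 1 ≤ n) (hnm : n ≤ m) (hvu : v ≤ u) :
    Function.Injective (bwd n m u v hn hnm hvu) := by
  rintro ⟨⟨μ1, hμ1⟩, ⟨zz1, hzz1⟩, ⟨z1, hz1⟩⟩ ⟨⟨μ2, hμ2⟩, ⟨zz2, hzz2⟩, ⟨z2, hz2⟩⟩ h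
  have hv := congrArg Subtype.val h
  dsimp only [bwd] at hv
  have hb : ∀ i j : ℕ, i < n+m → j ≤ i →
      bwdf n m u v zz1 z1 i j = bwdf n m u v zz2 z2 i j := by
    intro i j hi hj
    have h2 := congrArg (fun Q => gz Q i j) hv
    rw [gz_mkGT _ _ hi hj, gz_mkGT _ _ hi hj] at h2
    exact h2
  have ezz : zz1 = zz2 := by
    apply GTPattern.ext'
    intro i j
    by_cases hij : (j:ℕ) ≤ (i:ℕ)
    · have hx := hb (i:ℕ) (j:ℕ) (by omega) hij
      simp only [bwdf, if_pos (show (i:ℕ) < m from i.isLt)] at hx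
      rw [gz_eq zz1 i j, gz_eq zz2 i j]
      exact hx
    · rw [zz1.zero_of_gt i j (by omega), zz2.zero_of_gt i j (by omega)]
  have eμ : μ1 = μ2 := by
    funext j
    have b1 := hzz1 ⟨(j:ℕ), lt_of_lt_of_le j.isLt hnm⟩
    have b2 := hzz2 ⟨(j:ℕ), lt_of_lt_of_le j.isLt hnm⟩
    rw [ezz] at b1
    have hx := b1.symm.trans b2
    rw [dif_pos (show ((⟨(j:ℕ), lt_of_lt_of_le j.isLt hnm⟩ : Fin m) : ℕ) < n from j.isLt),
      dif_pos (show ((⟨(j:ℕ), lt_of_lt_of_le j.isLt hnm⟩ : Fin m) : ℕ) < n from j.isLt)] at hx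
    exact hx
  subst eμ
  subst ezz
  have ez : z1 = z2 := by
    apply GTPattern.ext'
    intro k j
    have hkn := k.isLt
    have hjn := j.isLt
    by_cases hij : (j:ℕ) ≤ (k:ℕ)
    · by_cases hk : (k:ℕ) = n-1
      · have b1 := hz1 j
        have b2 := hz2 j
        rw [gz_eq] at b1 b2
        rw [gz_eq z1 k j, gz_eq z2 k j, hk]
        exact b1.trans b2.symm
      · have hx := hb (n+m-2-(k:ℕ)) ((j:ℕ) + (n-1-(k:ℕ))) (by omega) (by omega)
        simp only [bwdf, if_neg (show ¬ (n+m-2-(k:ℕ) < m) by omega),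
          if_neg (show ¬ ((j:ℕ)+(n-1-(k:ℕ)) + m ≤ n+m-2-(k:ℕ)) by omega),
          if_neg (show ¬ (n ≤ (j:ℕ)+(n-1-(k:ℕ))) by omega)] at hx
        rw [show n+m-2-(n+m-2-(k:ℕ)) = (k:ℕ) by omega,
          show (j:ℕ)+(n-1-(k:ℕ)) - ((n+m-2-(k:ℕ))-m+1) = (j:ℕ) by omega] at hx
        rw [gz_eq z1 k j, gz_eq z2 k j]
        exact hx
    · rw [z1.zero_of_gt k j (by omega), z2.zero_of_gt k j (by omega)]
  subst ez
  rfl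

/-- for `1 ≤ n ≤ m` and `u ≥ v ≥ 0`, there is a bijection between
Gelfand–Tsetlin patterns of height `n + m` with bottom row
`(u,...,u,v,...,v)` (`n` copies of `u`, then `m` copies of `v`) and pairs `(z, z')`,
indexed by partitions `μ` with `v ≤ μ_n ≤ ... ≤ μ_1 ≤ u`, where `z` is a
Gelfand–Tsetlin pattern of height `m` with bottom row `(μ, v,...,v)`
(`m - n` copies of `v`) and `z'` is one of height `n` with bottom row `μ`. -/
theorem gt_pattern_decomposition (n m u v : ℕ) (hn : 1 ≤ n) (hnm : n ≤ m)
    (hvu : v ≤ u) :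
    Nonempty (
      {P : GTPattern (n + m) //
        ∀ j : Fin (n + m), P.z ⟨n + m - 1, by omega⟩ j = if (j : ℕ) < n then u else v}
      ≃
      Σ μ : {μ : Fin n → ℕ //
          (∀ i j : Fin n, i ≤ j → μ j ≤ μ i) ∧ ∀ i, v ≤ μ i ∧ μ i ≤ u},
        {zz : GTPattern m //
            ∀ j : Fin m, zz.z ⟨m - 1, by omega⟩ j
              = if h : (j : ℕ) < n then μ.1 ⟨(j : ℕ), h⟩ else v}
        × {z' : GTPattern n //
            ∀ j : Fin n, z'.z ⟨n - 1, by omega⟩ j = μ.1 j} ) := by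
  exact ⟨⟨fwd n m u v hn hnm hvu, bwd n m u v hn hnm hvu,
    bwd_fwd n m u v hn hnm hvu,
    fun x => bwd_inj n m u v hn hnm hvu
      (bwd_fwd n m u v hn hnm hvu (bwd n m u v hn hnm hvu x))⟩⟩
end
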